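/- Let R be a commutative local ring, let Q• and P• be bounded cochain complexes of finitely generated free R-modules, and let φ : Q• → P• be a quasi-isomorphism of complexes. Then for every f ∈ R, the chain map f·id on Q• is null-homotopic if and only if the chain map f·id on P• is null-homotopic. (Quasi-isomorphism invariance of the homotopy-annihilator ideal of a complex.) -/

import Mathlib

open CategoryTheory Limits

/-!
Bounded above complexes of projective modules are K-projective, and a quasi-isomorphism between
K-projective complexes is a homotopy equivalence. Null-homotopy of `f • 𝟙` is invariant under
a homotopy equivalence `e`, since
`f • 𝟙 ∼ f • (e.inv ≫ e.hom) = e.inv ≫ (f • 𝟙) ≫ e.hom`.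
-/

namespace HomotopyEquiv

variable {V : Type*} [Category V] [Preadditive V] {ι : Type*} {c : ComplexShape ι}
  {K L : HomologicalComplex V c} {R : Type*} [Semiring R] [Linear R V]

lemma nonempty_homotopy_smul_id_zero_of_nonempty (e : HomotopyEquiv K L) (a : R)
    (h : Nonempty (Homotopy (a • 𝟙 K) 0)) : Nonempty (Homotopy (a • 𝟙 L) 0) :=
  let ⟨h⟩ := h
  ⟨((e.homotopyInvHomId.smul a).symm.trans (Homotopy.ofEq (by simp))).trans
    (((h.compLeft e.inv).compRight e.hom).trans (Homotopy.ofEq (by simp)))⟩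

lemma nonempty_homotopy_smul_id_zero_iff (e : HomotopyEquiv K L) (a : R) :
    Nonempty (Homotopy (a • 𝟙 K) 0) ↔ Nonempty (Homotopy (a • 𝟙 L) 0) :=
  ⟨e.nonempty_homotopy_smul_id_zero_of_nonempty a,
    e.symm.nonempty_homotopy_smul_id_zero_of_nonempty a⟩

end HomotopyEquiv

namespace CochainComplex

lemma exists_isStrictlyLE_of_finite_support {C : Type*} [Category C] [HasZeroMorphisms C]
    (K : CochainComplex C ℤ) (hK : ∃ s : Finset ℤ, ∀ i ∉ s, IsZero (K.X i)) :
    ∃ d : ℤ, K.IsStrictlyLE d := by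
  obtain ⟨s, hs⟩ := hK
  obtain ⟨d, hd⟩ := s.finite_toSet.bddAbove
  exact ⟨d, (K.isStrictlyLE_iff d).2 fun i hi =>
    hs i fun hmem => absurd (hd hmem) (not_le.2 hi)⟩

lemma isKProjective_of_finite_support_of_projective {R : Type*} [Ring R]
    (K : CochainComplex (ModuleCat R) ℤ) (hK : ∃ s : Finset ℤ, ∀ i ∉ s, IsZero (K.X i))
    [∀ i, Module.Projective R (K.X i)] : K.IsKProjective := by
  obtain ⟨d, _⟩ := K.exists_isStrictlyLE_of_finite_support hK
  exact isKProjective_of_projective K d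

end CochainComplex

theorem stmt_5 {R : Type} [CommRing R]
    (Q P : CochainComplex (ModuleCat.{0} R) ℤ)
    (hQbd : ∃ s : Finset ℤ, ∀ i ∉ s, Limits.IsZero (Q.X i))
    (hPbd : ∃ s : Finset ℤ, ∀ i ∉ s, Limits.IsZero (P.X i))
    (hQfree : ∀ i, Module.Free R (Q.X i))
    (hPfree : ∀ i, Module.Free R (P.X i))
    (φ : Q ⟶ P) (hφ : QuasiIso φ) (f : R) :
    Nonempty (Homotopy (f • 𝟙 Q) (0 : Q ⟶ Q)) ↔ Nonempty (Homotopy (f • 𝟙 P) (0 : P ⟶ P)) := by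
  have := Q.isKProjective_of_finite_support_of_projective hQbd
  have := P.isKProjective_of_finite_support_of_projective hPbd
  obtain ⟨e, -⟩ := (CochainComplex.IsKProjective.quasiIso_iff φ).1 hφ
  exact e.nonempty_homotopy_smul_id_zero_iff f
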